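/- For every fixed integer k ≥ 2 and every fixed real p ≥ 1 there exists q̄ such that for all integers q ≥ q̄, all integers s with 0 ≤ s ≤ q−1, and all reals a, b with 0 ≤ a, b ≤ k, one has ((a·q^{(p+1)(q−s)})^p + q^{p((p+1)(q−s)−1)})^{1/p} > a·q^{(p+1)(q−s)} + b·q^{(p+1)(q−s−1)}. -/

import Mathlib

/-!
Writing `X = q ^ ((p + 1) (q - s))`, the left side is `(a + b q^{-(p+1)}) X` and the right side
is `(a ^ p + q ^ (-p)) ^ (1 / p) X`. By the mean value theorem, with `a, b ≤ k`,
`(a + b q^{-(p+1)}) ^ p - a ^ p ≤ p k (k + 1) ^ (p - 1) q^{-(p+1)}`, which is below `q ^ (-p)`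
once `q > p k (k + 1) ^ (p - 1)`.
-/

open Real

lemma rpow_add_le_rpow_add_mul {p a ε : ℝ} (hp : 1 ≤ p) (ha : 0 ≤ a) (hε : 0 ≤ ε) :
    (a + ε) ^ p ≤ a ^ p + p * (a + ε) ^ (p - 1) * ε := by
  rcases hε.eq_or_lt with rfl | hε
  · simp
  obtain ⟨c, ⟨hac, hcε⟩, hslope⟩ := exists_hasDerivAt_eq_slope (fun x => x ^ p)
    (fun x => p * x ^ (p - 1)) (lt_add_of_pos_right a hε)
    (fun x _ => (continuousAt_rpow_const x p (Or.inr (by linarith))).continuousWithinAt)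
    (fun x _ => hasDerivAt_rpow_const (Or.inr hp))
  rw [add_sub_cancel_left, eq_div_iff hε.ne'] at hslope
  have hc : c ^ (p - 1) ≤ (a + ε) ^ (p - 1) :=
    rpow_le_rpow (by linarith) hcε.le (by linarith)
  have := mul_le_mul_of_nonneg_right (mul_le_mul_of_nonneg_left hc (by linarith : 0 ≤ p)) hε.le
  linarith

lemma add_lt_rpow_add_one_div {p a ε d K : ℝ} (hp : 1 ≤ p) (ha : 0 ≤ a) (hε : 0 ≤ ε)
    (hK : a + ε ≤ K) (h : p * K ^ (p - 1) * ε < d) : a + ε < (a ^ p + d) ^ (1 / p) := by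
  have hp0 : 0 < p := by linarith
  have hmono : (a + ε) ^ (p - 1) ≤ K ^ (p - 1) := rpow_le_rpow (by linarith) hK (by linarith)
  have hpow : (a + ε) ^ p < a ^ p + d := by
    have := mul_le_mul_of_nonneg_right (mul_le_mul_of_nonneg_left hmono hp0.le) hε
    linarith [rpow_add_le_rpow_add_mul hp ha hε]
  have hd : 0 ≤ d :=
    (mul_nonneg (mul_nonneg hp0.le (rpow_nonneg (by linarith) _)) hε).trans h.le
  rw [one_div, lt_rpow_inv_iff_of_pos (by linarith) (by positivity) hp0]
  exact hpow

lemma rpow_add_rpow_mul_one_div {p q a : ℝ} (hp : 0 < p) (hq : 0 < q) (ha : 0 ≤ a) (e : ℝ) :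
    ((a * q ^ e) ^ p + q ^ (p * (e - 1))) ^ (1 / p) = (a ^ p + q ^ (-p)) ^ (1 / p) * q ^ e := by
  have hfactor : (a * q ^ e) ^ p + q ^ (p * (e - 1)) = (a ^ p + q ^ (-p)) * q ^ (e * p) := by
    rw [mul_rpow ha (rpow_nonneg hq.le _), ← rpow_mul hq.le,
      show p * (e - 1) = -p + e * p by ring, rpow_add hq]
    ring
  rw [hfactor, mul_rpow (by positivity) (rpow_nonneg hq.le _), ← rpow_mul hq.le,
    show e * p * (1 / p) = e by field_simp]

lemma add_mul_rpow_neg_lt {p a b K Q : ℝ} (hp : 1 ≤ p) (ha : 0 ≤ a) (hb : 0 ≤ b)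
    (haK : a ≤ K) (hbK : b ≤ K) (hKQ : K + 1 ≤ Q) (hQ : p * K * (K + 1) ^ (p - 1) < Q) :
    a + b * Q ^ (-(p + 1)) < (a ^ p + Q ^ (-p)) ^ (1 / p) := by
  have hQ0 : 0 < Q := by linarith
  have hε : b * Q ^ (-(p + 1)) ≤ K * Q ^ (-(p + 1)) :=
    mul_le_mul_of_nonneg_right hbK (rpow_nonneg hQ0.le _)
  have hε1 : b * Q ^ (-(p + 1)) ≤ 1 := by
    have hpow : Q ^ (-(p + 1)) ≤ Q⁻¹ := by
      rw [← rpow_neg_one]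
      exact rpow_le_rpow_of_exponent_le (by linarith) (by linarith)
    have : K * Q⁻¹ ≤ 1 := by
      rw [← div_eq_mul_inv, div_le_one hQ0]
      linarith
    nlinarith
  refine add_lt_rpow_add_one_div hp ha (mul_nonneg hb (rpow_nonneg hQ0.le _))
    (by linarith : a + b * Q ^ (-(p + 1)) ≤ K + 1) ?_
  calc p * (K + 1) ^ (p - 1) * (b * Q ^ (-(p + 1)))
      ≤ p * K * (K + 1) ^ (p - 1) * Q ^ (-(p + 1)) := by
        have : 0 ≤ p * (K + 1) ^ (p - 1) := mul_nonneg (by linarith) (rpow_nonneg (by linarith) _)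
        nlinarith
    _ < Q * Q ^ (-(p + 1)) := mul_lt_mul_of_pos_right hQ (rpow_pos_of_pos hQ0 _)
    _ = Q ^ (-p) := by rw [← rpow_one_add' hQ0.le (by linarith)]; ring_nf

theorem estimate_lemma (k : ℕ) (p : ℝ) (hp : 1 ≤ p) :
    ∃ qbar : ℕ, ∀ q : ℕ, qbar ≤ q → ∀ s : ℕ, s + 1 ≤ q →
      ∀ a b : ℝ, 0 ≤ a → a ≤ (k : ℝ) → 0 ≤ b → b ≤ (k : ℝ) →
        a * (q : ℝ) ^ ((p + 1) * ((q : ℝ) - (s : ℝ))) +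
            b * (q : ℝ) ^ ((p + 1) * ((q : ℝ) - (s : ℝ) - 1)) <
          ((a * (q : ℝ) ^ ((p + 1) * ((q : ℝ) - (s : ℝ)))) ^ p +
              (q : ℝ) ^ (p * ((p + 1) * ((q : ℝ) - (s : ℝ)) - 1))) ^ (1 / p) := by
  set C : ℝ := p * k * ((k : ℝ) + 1) ^ (p - 1)
  refine ⟨⌈C⌉₊ + k + 1, fun q hq s _ a b ha hak hb hbk => ?_⟩
  have hq' : (⌈C⌉₊ : ℝ) + k + 1 ≤ q := by exact_mod_cast hq
  have hq0 : (0 : ℝ) < q := by linarith [Nat.cast_nonneg (α := ℝ) ⌈C⌉₊]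
  set e : ℝ := (p + 1) * ((q : ℝ) - s)
  have hlhs : a * (q : ℝ) ^ e + b * (q : ℝ) ^ ((p + 1) * ((q : ℝ) - s - 1))
      = (a + b * (q : ℝ) ^ (-(p + 1))) * (q : ℝ) ^ e := by
    rw [show (p + 1) * ((q : ℝ) - s - 1) = e + -(p + 1) by ring, rpow_add hq0]
    ring
  rw [hlhs, rpow_add_rpow_mul_one_div (by linarith) hq0 ha]
  refine mul_lt_mul_of_pos_right ?_ (rpow_pos_of_pos hq0 _)
  exact add_mul_rpow_neg_lt hp ha hb hak hbk (by linarith [Nat.cast_nonneg (α := ℝ) ⌈C⌉₊])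
    (by linarith [Nat.le_ceil C])
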